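/- arXiv:math/0703850 — 9 statements merged into one kernel-verified Lean document; each statement's English description precedes it below -/
import Mathlib

section
/- Let β ≥ 1 and define h(w) := β(1 − rw/c)^d for w ∈ [0, c/r]. Then h is strictly decreasing and convex on [0, c/r], h(c/r) = 0, h′(c/r) = 0, and for every w ∈ (0, c/r) and every α ∈ ℝ one has [rw + (μ−r)α − c]·h′(w) + (1/2)σ²α²·h″(w) − λ·h(w) ≥ 0, with equality if and only if α = ((μ−r)/(σ²(d−1)))·(c/r − w). -/
/-!
Write `u = 1 - r w / c`, so that `h = β u ^ d` and `h'`, `h''` are explicit multiples of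
`u ^ (d - 1)` and `u ^ (d - 2)`; since `d > 1` their signs give monotonicity and convexity, and
both `h` and `h'` vanish at `u = 0`. The exponent `d` is the larger root of
`r d² - (r + λ + m) d + λ = 0`, equivalently `(d - 1) (r d - λ) = m d`, and this relation is exactly
what turns the HJB residual into the perfect square `½ σ² d (d - 1) (r / c)² β u ^ (d - 2) (α - α₀)²`
with positive coefficient.
-/

open Real Set

section Exponent

variable {r lam m d : ℝ}

theorem discriminant_eq (r lam m : ℝ) :
    (r + lam + m) ^ 2 - 4 * r * lam = (r - lam - m) ^ 2 + 4 * r * m := by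
  ring

theorem quadratic_eq_zero_of_eq_root (hr : 0 < r) (hm : 0 < m)
    (hd : d = ((r + lam + m) + √((r + lam + m) ^ 2 - 4 * r * lam)) / (2 * r)) :
    r * d ^ 2 - (r + lam + m) * d + lam = 0 := by
  have hdisc : 0 ≤ (r + lam + m) ^ 2 - 4 * r * lam := by
    rw [discriminant_eq]; positivity
  have hroot := (quadratic_eq_zero_iff hr.ne' (b := -(r + lam + m)) (c := lam)
    (by rw [discrim, ← sq, sq_sqrt hdisc]; ring) d).2 (Or.inl (by rw [hd, neg_neg]))
  linear_combination hroot

theorem one_lt_of_eq_root (hr : 0 < r) (hm : 0 < m)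
    (hd : d = ((r + lam + m) + √((r + lam + m) ^ 2 - 4 * r * lam)) / (2 * r)) :
    1 < d := by
  have hsqrt : r - lam - m < √((r + lam + m) ^ 2 - 4 * r * lam) :=
    calc r - lam - m ≤ |r - lam - m| := le_abs_self _
      _ = √((r - lam - m) ^ 2) := (sqrt_sq_eq_abs _).symm
      _ < √((r + lam + m) ^ 2 - 4 * r * lam) := by
        rw [discriminant_eq]
        exact sqrt_lt_sqrt (sq_nonneg _) (by linarith [mul_pos hr hm])
  rw [hd, lt_div_iff₀ (by positivity)]
  linarith

theorem sub_one_mul_eq_of_eq_root (hr : 0 < r) (hm : 0 < m)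
    (hd : d = ((r + lam + m) + √((r + lam + m) ^ 2 - 4 * r * lam)) / (2 * r)) :
    (d - 1) * (r * d - lam) = m * d := by
  linear_combination quadratic_eq_zero_of_eq_root hr hm hd

end Exponent

noncomputable def valueProfile (β r c d w : ℝ) : ℝ := β * (1 - r * w / c) ^ d

noncomputable def hjbResidual (r mu sigma lam c : ℝ) (f : ℝ → ℝ) (w α : ℝ) : ℝ :=
  (r * w + (mu - r) * α - c) * deriv f w + (1/2) * sigma ^ 2 * α ^ 2 * deriv (deriv f) w
    - lam * f w

section Profile

variable {β r c d : ℝ}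

theorem one_sub_mul_div_pos (hr : 0 < r) (hc : 0 < c) {w : ℝ} (hw : w < c / r) :
    0 < 1 - r * w / c := by
  rw [lt_div_iff₀ hr] at hw
  rw [sub_pos, div_lt_one hc]
  linarith

theorem hasDerivAt_one_sub_mul_div (r c w : ℝ) :
    HasDerivAt (fun x => 1 - r * x / c) (-(r / c)) w := by
  simpa using (((hasDerivAt_id w).const_mul r).div_const c).const_sub 1

theorem hasDerivAt_valueProfile (hd : 1 ≤ d) (w : ℝ) :
    HasDerivAt (valueProfile β r c d) (-(β * d * (r / c)) * (1 - r * w / c) ^ (d - 1)) w :=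
  (((hasDerivAt_one_sub_mul_div r c w).rpow_const (Or.inr hd)).const_mul β).congr_deriv
    (by ring)

theorem deriv_valueProfile (hd : 1 ≤ d) :
    deriv (valueProfile β r c d) = fun w => -(β * d * (r / c)) * (1 - r * w / c) ^ (d - 1) :=
  funext fun w => (hasDerivAt_valueProfile hd w).deriv

theorem hasDerivAt_deriv_valueProfile (hd : 1 ≤ d) {w : ℝ} (hw : 1 - r * w / c ≠ 0) :
    HasDerivAt (deriv (valueProfile β r c d))
      (β * d * (d - 1) * (r / c) ^ 2 * (1 - r * w / c) ^ (d - 2)) w := by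
  rw [deriv_valueProfile hd]
  refine (((hasDerivAt_one_sub_mul_div r c w).rpow_const (p := d - 1) (Or.inl hw)).const_mul
    (-(β * d * (r / c)))).congr_deriv ?_
  rw [show d - 1 - 1 = d - 2 by ring]
  ring

theorem continuous_valueProfile (hd : 1 ≤ d) : Continuous (valueProfile β r c d) :=
  continuous_iff_continuousAt.2 fun w => (hasDerivAt_valueProfile hd w).continuousAt

theorem strictAntiOn_valueProfile (hβ : 0 < β) (hr : 0 < r) (hc : 0 < c) (hd : 1 ≤ d) :
    StrictAntiOn (valueProfile β r c d) (Iic (c / r)) := by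
  refine strictAntiOn_of_deriv_neg (convex_Iic _) (continuous_valueProfile hd).continuousOn
    fun w hw => ?_
  rw [interior_Iic] at hw
  have hu := one_sub_mul_div_pos hr hc hw
  rw [(hasDerivAt_valueProfile hd w).deriv, neg_mul, neg_lt_zero]
  positivity

theorem convexOn_valueProfile (hβ : 0 < β) (hr : 0 < r) (hc : 0 < c) (hd : 1 ≤ d) :
    ConvexOn ℝ (Iic (c / r)) (valueProfile β r c d) := by
  have hu : ∀ w ∈ interior (Iic (c / r)), 0 < 1 - r * w / c := fun w hw =>
    one_sub_mul_div_pos hr hc (by rwa [interior_Iic] at hw)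
  refine convexOn_of_deriv2_nonneg (convex_Iic _) (continuous_valueProfile hd).continuousOn
    (fun w _ => (hasDerivAt_valueProfile hd w).differentiableAt.differentiableWithinAt)
    (fun w hw =>
      (hasDerivAt_deriv_valueProfile hd (hu w hw).ne').differentiableAt.differentiableWithinAt)
    (fun w hw => ?_)
  have hu_pos := hu w hw
  have := sub_nonneg.2 hd
  rw [Function.iterate_succ_apply, Function.iterate_one,
    (hasDerivAt_deriv_valueProfile hd hu_pos.ne').deriv]
  positivity

theorem one_sub_mul_div_eq_zero (hr : r ≠ 0) (hc : c ≠ 0) : 1 - r * (c / r) / c = 0 := by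
  field_simp
  ring

theorem valueProfile_eq_zero (hr : r ≠ 0) (hc : c ≠ 0) (hd : d ≠ 0) :
    valueProfile β r c d (c / r) = 0 := by
  rw [valueProfile, one_sub_mul_div_eq_zero hr hc, zero_rpow hd, mul_zero]

theorem deriv_valueProfile_eq_zero (hr : r ≠ 0) (hc : c ≠ 0) (hd : 1 < d) :
    deriv (valueProfile β r c d) (c / r) = 0 := by
  rw [(hasDerivAt_valueProfile hd.le _).deriv, one_sub_mul_div_eq_zero hr hc,
    zero_rpow (by linarith), mul_zero]

theorem hjbResidual_valueProfile {mu sigma lam : ℝ} (hr : 0 < r) (hc : 0 < c)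
    (hs : sigma ≠ 0) (hd : 1 < d)
    (hchar : (d - 1) * (r * d - lam) = (mu - r) ^ 2 / (2 * sigma ^ 2) * d)
    {w : ℝ} (hw : w < c / r) (α : ℝ) :
    hjbResidual r mu sigma lam c (valueProfile β r c d) w α
      = β * (1 - r * w / c) ^ (d - 2) * (sigma ^ 2 * d * (d - 1) * (r / c) ^ 2 / 2)
          * (α - (mu - r) / (sigma ^ 2 * (d - 1)) * (c / r - w)) ^ 2 := by
  set u := 1 - r * w / c with hu_def
  have hu : 0 < u := one_sub_mul_div_pos hr hc hw
  have hu1 : u ^ (d - 1) = u * u ^ (d - 2) := by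
    rw [show d - 1 = (d - 2) + 1 by ring, rpow_add hu, rpow_one, mul_comm]
  have hu0 : u ^ d = u ^ 2 * u ^ (d - 2) := by
    rw [show d = (d - 2) + 2 by ring, rpow_add hu, rpow_two, mul_comm, sub_add_cancel]
  have hw_eq : w = c / r * (1 - u) := by
    rw [hu_def]; field_simp; ring
  have hd1 : d - 1 ≠ 0 := by linarith
  rw [hjbResidual, (hasDerivAt_deriv_valueProfile hd.le hu.ne').deriv,
    (hasDerivAt_valueProfile hd.le w).deriv, valueProfile, ← hu_def, hu1, hu0, hw_eq]
  have hlam : lam = r * d - (mu - r) ^ 2 * d / (2 * sigma ^ 2 * (d - 1)) := by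
    rw [eq_sub_iff_add_eq, ← eq_sub_iff_add_eq', div_eq_iff (by positivity)]
    field_simp at hchar
    linear_combination -hchar
  rw [hlam]
  field_simp
  ring

end Profile

theorem stmt_1_general (r mu sigma lam c m d : ℝ)
    (hr : 0 < r) (hmu : r < mu) (hs : 0 < sigma) (hc : 0 < c)
    (hm : m = (mu - r)^2 / (2 * sigma^2))
    (hd : d = ((r + lam + m) + Real.sqrt ((r + lam + m)^2 - 4*r*lam)) / (2*r))
    (beta : ℝ) (hbeta : 1 ≤ beta)
    (h : ℝ → ℝ) (hh : ∀ w, h w = beta * (1 - r * w / c) ^ d) :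
    StrictAntiOn h (Set.Icc 0 (c/r)) ∧
    ConvexOn ℝ (Set.Icc 0 (c/r)) h ∧
    h (c/r) = 0 ∧
    deriv h (c/r) = 0 ∧
    ∀ w ∈ Set.Ioo 0 (c/r), ∀ α : ℝ,
      0 ≤ (r * w + (mu - r) * α - c) * deriv h w
            + (1/2) * sigma^2 * α^2 * deriv (deriv h) w - lam * h w ∧
      ((r * w + (mu - r) * α - c) * deriv h w
            + (1/2) * sigma^2 * α^2 * deriv (deriv h) w - lam * h w = 0
        ↔ α = ((mu - r) / (sigma^2 * (d - 1))) * (c/r - w)) := by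
  obtain rfl : h = valueProfile beta r c d := funext hh
  have hm0 : 0 < m := by rw [hm]; have := sub_pos.2 hmu; positivity
  have hd1 : 1 < d := one_lt_of_eq_root hr hm0 hd
  have hchar := hm ▸ sub_one_mul_eq_of_eq_root hr hm0 hd
  have hβ : 0 < beta := by linarith
  refine ⟨(strictAntiOn_valueProfile hβ hr hc hd1.le).mono Icc_subset_Iic_self,
    (convexOn_valueProfile hβ hr hc hd1.le).subset Icc_subset_Iic_self (convex_Icc _ _),
    valueProfile_eq_zero hr.ne' hc.ne' (by linarith),
    deriv_valueProfile_eq_zero hr.ne' hc.ne' hd1, fun w hw α => ?_⟩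
  change 0 ≤ hjbResidual r mu sigma lam c _ w α ∧ (hjbResidual r mu sigma lam c _ w α = 0 ↔ _)
  rw [hjbResidual_valueProfile hr hc hs.ne' hd1 hchar hw.2]
  have hK :
      0 < beta * (1 - r * w / c) ^ (d - 2) * (sigma ^ 2 * d * (d - 1) * (r / c) ^ 2 / 2) := by
    have := one_sub_mul_div_pos hr hc hw.2
    have := sub_pos.2 hd1
    positivity
  exact ⟨by positivity, by rw [mul_eq_zero, or_iff_right hK.ne', pow_eq_zero_iff two_ne_zero,
    sub_eq_zero]⟩

theorem stmt_1 (r mu sigma lam c m d : ℝ)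
    (hr : 0 < r) (hmu : r < mu) (hs : 0 < sigma) (hlam : 0 < lam) (hc : 0 < c)
    (hm : m = (mu - r)^2 / (2 * sigma^2))
    (hd : d = ((r + lam + m) + Real.sqrt ((r + lam + m)^2 - 4*r*lam)) / (2*r))
    (beta : ℝ) (hbeta : 1 ≤ beta)
    (h : ℝ → ℝ) (hh : ∀ w, h w = beta * (1 - r * w / c) ^ d) :
    StrictAntiOn h (Set.Icc 0 (c/r)) ∧
    ConvexOn ℝ (Set.Icc 0 (c/r)) h ∧
    h (c/r) = 0 ∧
    deriv h (c/r) = 0 ∧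
    ∀ w ∈ Set.Ioo 0 (c/r), ∀ α : ℝ,
      0 ≤ (r * w + (mu - r) * α - c) * deriv h w
            + (1/2) * sigma^2 * α^2 * deriv (deriv h) w - lam * h w ∧
      ((r * w + (mu - r) * α - c) * deriv h w
            + (1/2) * sigma^2 * α^2 * deriv (deriv h) w - lam * h w = 0
        ↔ α = ((mu - r) / (sigma^2 * (d - 1))) * (c/r - w)) :=
  stmt_1_general r mu sigma lam c m d hr hmu hs hc hm hd beta hbeta h hh
end

section
/- Suppose real numbers y_l and y′_l satisfy y_l = −(1/d)·(c/r − w_l) and σ²w_l²·(y′_l − 1) = −2λ·y_l² + 2(μw_l − c)·y_l. Then y′_l = 1 + (r+m)/λ − (r/λ)·d, and moreover y′_l < (μ+r)/(2λ). -/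
/-!
Writing `p(t) = r t² - (r + λ + m) t + λ`, we have `p(1) = -m < 0`, so the larger root `d` of `p`
exceeds `1`. With `x = (μ - r) / (σ² (d - 1))` and `2 σ² m = (μ - r)²`, the relation `p(d) = 0`
becomes `d (μ - r) x = 2 (r d - λ)`, and this is exactly what makes the ODE at `w_l` hold with
slope `1 / d`. Since the ODE is affine in `y'_l` with nonzero coefficient `σ² w_l²`, `y'_l = 1 / d`.
Both claims are then rearrangements of `p(d) = 0`.
-/

section LargerRoot

variable {a s c d t : ℝ}

theorem sq_sub_pos_of_quadratic_neg (ha : 0 < a) (ht : a * t ^ 2 - s * t + c < 0) :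
    0 < s ^ 2 - 4 * a * c := by
  nlinarith [sq_nonneg (2 * a * t - s), mul_pos ha (neg_pos.mpr ht)]

theorem quadratic_eq_zero_of_eq_larger_root (ha : a ≠ 0) (hdisc : 0 ≤ s ^ 2 - 4 * a * c)
    (hd : d = (s + √(s ^ 2 - 4 * a * c)) / (2 * a)) : a * d ^ 2 - s * d + c = 0 := by
  have hroot : 2 * a * d - s = √(s ^ 2 - 4 * a * c) := by
    rw [hd]; field_simp; ring
  have hsq : (2 * a * d - s) ^ 2 = s ^ 2 - 4 * a * c := by rw [hroot, Real.sq_sqrt hdisc]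
  have h4a : 4 * a * (a * d ^ 2 - s * d + c) = 0 := by linear_combination hsq
  exact (mul_eq_zero.mp h4a).resolve_left (by positivity)

theorem lt_larger_root_of_quadratic_neg (ha : 0 < a) (ht : a * t ^ 2 - s * t + c < 0)
    (hd : d = (s + √(s ^ 2 - 4 * a * c)) / (2 * a)) : t < d := by
  have hlt : 2 * a * t - s < √(s ^ 2 - 4 * a * c) :=
    Real.lt_sqrt_of_sq_lt (by nlinarith [mul_pos ha (neg_pos.mpr ht)])
  have hroot : 2 * a * d = s + √(s ^ 2 - 4 * a * c) := by
    rw [hd]; field_simp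
  nlinarith

end LargerRoot

section Slope

variable {r mu sigma lam c m d x wl yl yl' : ℝ}

theorem slope_eq_inv_of_ode (hr : 0 < r) (hmu : r < mu) (hs : 0 < sigma) (hc : 0 < c)
    (hd1 : 1 < d) (hquad : r * d ^ 2 - (r + lam + m) * d + lam = 0)
    (hm : m = (mu - r) ^ 2 / (2 * sigma ^ 2))
    (hx : x = (mu - r) / (sigma ^ 2 * (d - 1)))
    (hwl : wl = (x / (1 + x)) * (c / r))
    (hyl : yl = -(1 / d) * (c / r - wl))
    (hode : sigma ^ 2 * wl ^ 2 * (yl' - 1) = -2 * lam * yl ^ 2 + 2 * (mu * wl - c) * yl) :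
    yl' = 1 / d := by
  have hd0 : d - 1 ≠ 0 := by linarith
  have hx0 : 0 < x := hx ▸ div_pos (by linarith) (mul_pos (by positivity) (by linarith))
  have hSx : sigma ^ 2 * x * (d - 1) = mu - r := by
    rw [hx]; field_simp
  have h2m : 2 * sigma ^ 2 * m = (mu - r) ^ 2 := by
    rw [hm]; field_simp
  have hxq : d * (mu - r) * x = 2 * (r * d - lam) := by
    refine mul_left_cancel₀ (mul_ne_zero (by positivity) hd0 : sigma ^ 2 * (d - 1) ≠ 0) ?_
    linear_combination (d * (mu - r)) * hSx - d * h2m - 2 * sigma ^ 2 * hquad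
  have hident : sigma ^ 2 * wl ^ 2 * (1 / d - 1)
      = -2 * lam * yl ^ 2 + 2 * (mu * wl - c) * yl := by
    subst hwl hyl
    field_simp
    linear_combination (-x * d) * hSx + hxq
  have hwl0 : sigma ^ 2 * wl ^ 2 ≠ 0 := by rw [hwl]; positivity
  linarith [mul_left_cancel₀ hwl0 (hode.trans hident.symm)]

end Slope

section Quadratic

variable {r mu lam m d : ℝ}

theorem inv_eq_of_quadratic (hlam : lam ≠ 0) (hd : d ≠ 0)
    (hquad : r * d ^ 2 - (r + lam + m) * d + lam = 0) :
    1 / d = 1 + (r + m) / lam - (r / lam) * d := by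
  field_simp
  linear_combination hquad

theorem inv_lt_of_quadratic (hmu : r < mu) (hlam : 0 < lam) (hm : 0 ≤ m) (hd1 : 1 < d)
    (hquad : r * d ^ 2 - (r + lam + m) * d + lam = 0) :
    1 / d < (mu + r) / (2 * lam) := by
  have hgap : (d - 1) * (2 * lam + 2 * m - 2 * r * d - (mu - r))
      = -((mu - r) * (d - 1) + 2 * m) := by
    linear_combination (-2) * hquad
  have hneg : 2 * lam + 2 * m - 2 * r * d - (mu - r) < 0 := by
    refine neg_of_mul_neg_right (hgap ▸ ?_) (sub_pos.mpr hd1).le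
    nlinarith [mul_pos (sub_pos.mpr hmu) (sub_pos.mpr hd1)]
  rw [div_lt_div_iff₀ (by linarith) (by positivity)]
  nlinarith [mul_pos (by linarith : (0 : ℝ) < d) (neg_pos.mpr hneg)]

end Quadratic

theorem stmt_5 (r mu sigma lam c m d x wl : ℝ)
    (hr : 0 < r) (hmu : r < mu) (hs : 0 < sigma) (hlam : 0 < lam) (hc : 0 < c)
    (hm : m = (mu - r)^2 / (2 * sigma^2))
    (hd : d = ((r + lam + m) + Real.sqrt ((r + lam + m)^2 - 4*r*lam)) / (2*r))
    (hx : x = (mu - r) / (sigma^2 * (d - 1)))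
    (hwl : wl = (x / (1 + x)) * (c / r))
    (yl yl' : ℝ)
    (hyl : yl = -(1/d) * (c/r - wl))
    (hode : sigma^2 * wl^2 * (yl' - 1) = -2 * lam * yl^2 + 2 * (mu * wl - c) * yl) :
    yl' = 1 + (r + m) / lam - (r / lam) * d ∧ yl' < (mu + r) / (2 * lam) := by
  have hm0 : 0 < m := hm ▸ by have := sub_pos.mpr hmu; positivity
  have hp1 : r * 1 ^ 2 - (r + lam + m) * 1 + lam < 0 := by linarith
  have hquad := quadratic_eq_zero_of_eq_larger_root hr.ne' (sq_sub_pos_of_quadratic_neg hr hp1).le hd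
  have hd1 := lt_larger_root_of_quadratic_neg hr hp1 hd
  rw [slope_eq_inv_of_ode hr hmu hs hc hd1 hquad hm hx hwl hyl hode]
  exact ⟨inv_eq_of_quadratic hlam.ne' (by linarith) hquad, inv_lt_of_quadratic hmu hlam hm0.le hd1 hquad⟩
end

section
/- Let h : [0, w_l] → ℝ be twice continuously differentiable with h(w) > 0 and h′(w) < 0 for all w ∈ [0, w_l], satisfying λh(w) = (μw − c)h′(w) + (1/2)σ²w²h″(w) for all w ∈ [0, w_l], with h(0) = 1 and h(w_l)/h′(w_l) = −(1/d)·(c/r − w_l). Then for every w ∈ [0, w_l], the function α ↦ (μ−r)α·h′(w) + (1/2)σ²α²·h″(w) attains its minimum over the interval [0, w] at α = w; equivalently, (μ−r)h′(w) + σ²w·h″(w) ≤ 0 for all w ∈ [0, w_l]. -/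
/-!
Write `P w = 2c - (μ+r) w` and `G = 2λ h + P h'`. By the ODE, `G w = w ((μ-r) h' w + σ² w h'' w)`,
so the first-order condition at `α = w` is `G ≤ 0` on `(0, w_l]` (at `w = 0` it reads
`(μ-r) h'(0) < 0`); once it holds, the quadratic in `α`, whose derivative is nonpositive at both
ends of `[0, w]`, decreases on `[0, w]`.

The definitions of `d`, `x` and `w_l` give `r d P(w_l) = 2λ (c - r w_l)`, which together with the
boundary condition is `G(w_l) = 0`. Differentiating and using the ODE once more,
`σ² w² G' = P G + w h' Q` with `Q w = (2λ - (μ+r)) σ² w - (μ-r) P w`, and the parameters make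
`P > 0` and `Q < 0` on `[0, w_l]`. So `G' > 0` wherever `G > 0`, and a function vanishing at `w_l`
that increases wherever it is positive is nowhere positive before `w_l`.
-/

open Set

lemma larger_root_spec {a b e d : ℝ} (ha : 0 < a) (hΔ : 0 ≤ b ^ 2 - 4 * a * e)
    (hd : d = (b + √(b ^ 2 - 4 * a * e)) / (2 * a)) :
    a * d ^ 2 - b * d + e = 0 ∧ b ≤ 2 * a * d := by
  have hdisc : discrim a (-b) e = √(b ^ 2 - 4 * a * e) * √(b ^ 2 - 4 * a * e) := by
    rw [Real.mul_self_sqrt hΔ, discrim]; ring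
  have hroot := (quadratic_eq_zero_iff ha.ne' hdisc d).mpr (Or.inl (by rw [hd, neg_neg]))
  refine ⟨by linear_combination hroot, ?_⟩
  rw [hd, mul_div_cancel₀ _ (by positivity)]
  linarith [Real.sqrt_nonneg (b ^ 2 - 4 * a * e)]

lemma lt_of_quadratic_eq_zero_of_neg {a b e d t : ℝ} (ha : 0 ≤ a)
    (hroot : a * d ^ 2 - b * d + e = 0) (hvertex : b ≤ 2 * a * d)
    (ht : a * t ^ 2 - b * t + e < 0) : t < d := by
  by_contra! htd
  have : 0 ≤ (t - d) * (a * (t + d) - b) := by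
    apply mul_nonneg (by linarith)
    nlinarith
  nlinarith

lemma add_mul_neg_of_neg_of_neg {p q a w : ℝ} (hp : p < 0) (ha : p + q * a < 0)
    (hw : w ∈ Icc 0 a) : p + q * w < 0 := by
  obtain ⟨hw0, hwa⟩ := hw
  rcases hw0.eq_or_lt with rfl | hw0
  · simpa using hp
  nlinarith [mul_nonneg hw0.le (sub_nonneg.mpr hwa)]

lemma isMinOn_quadratic_Icc {a b w : ℝ} (ha : a ≤ 0) (hw : a + 2 * b * w ≤ 0) :
    IsMinOn (fun α => a * α + b * α ^ 2) (Icc 0 w) w := by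
  intro α ⟨hα0, hαw⟩
  have hslope : a + b * (α + w) ≤ 0 := by
    rcases le_total 0 b with hb | hb <;> nlinarith
  show a * w + b * w ^ 2 ≤ a * α + b * α ^ 2
  nlinarith [mul_nonneg (sub_nonneg.mpr hαw) (neg_nonneg.mpr hslope)]

lemma nonpos_on_Icc_of_deriv_pos_of_pos {G : ℝ → ℝ} {a b : ℝ} (hG : ContinuousOn G (Icc a b))
    (hderiv : ∀ u ∈ Ioo a b, 0 < G u → 0 < deriv G u) (hb : G b ≤ 0) :
    ∀ w ∈ Icc a b, G w ≤ 0 := by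
  intro w ⟨haw, hwb⟩
  by_contra! hw
  obtain ⟨z, ⟨⟨hwz, hzb⟩, hGz⟩, hzmin⟩ : ∃ z, IsLeast (Icc w b ∩ G ⁻¹' Iic 0) z :=
    (isCompact_Icc.of_isClosed_subset
      ((hG.mono (Icc_subset_Icc_left haw)).preimage_isClosed_of_isClosed isClosed_Icc isClosed_Iic)
      inter_subset_left).exists_isLeast ⟨b, ⟨hwb, le_rfl⟩, hb⟩
  have hwz' : w < z := hwz.lt_of_ne (by rintro rfl; exact hGz.not_gt hw)
  have hpos : ∀ u ∈ Ico w z, 0 < G u := fun u ⟨hwu, huz⟩ => by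
    by_contra! hu
    exact (hzmin ⟨⟨hwu, huz.le.trans hzb⟩, hu⟩).not_gt huz
  have hmono : StrictMonoOn G (Icc w z) := by
    refine strictMonoOn_of_deriv_pos (convex_Icc w z) (hG.mono (Icc_subset_Icc haw hzb)) ?_
    rw [interior_Icc]
    exact fun u ⟨hwu, huz⟩ =>
      hderiv u ⟨haw.trans_lt hwu, huz.trans_le hzb⟩ (hpos u ⟨hwu.le, huz⟩)
  exact (hmono ⟨le_rfl, hwz⟩ ⟨hwz, le_rfl⟩ hwz').not_ge (hGz.trans hw.le)

lemma continuousOn_deriv_Icc {f : ℝ → ℝ} {a b : ℝ} {n : WithTop ℕ∞} (hab : a < b)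
    (hf : ContDiffOn ℝ n f (Icc a b)) (hn : 1 ≤ n)
    (hdf : ∀ x ∈ Icc a b, DifferentiableAt ℝ f x) : ContinuousOn (deriv f) (Icc a b) :=
  (hf.continuousOn_derivWithin (uniqueDiffOn_Icc hab) hn).congr fun x hx =>
    ((hdf x hx).derivWithin ((uniqueDiffOn_Icc hab) x hx)).symm

section LendingLevel

variable {r mu sigma lam c m d x wl : ℝ}

lemma two_mul_sub_lam_eq_of_root (hs : 0 < sigma) (hd1 : 1 < d)
    (hroot : r * d ^ 2 - (r + lam + m) * d + lam = 0)
    (hm : m = (mu - r) ^ 2 / (2 * sigma ^ 2)) (hx : sigma ^ 2 * (d - 1) * x = mu - r) :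
    2 * (r * d - lam) = d * x * (mu - r) := by
  have hσd : sigma ^ 2 * (d - 1) ≠ 0 := by have := sub_pos.mpr hd1; positivity
  have hm' : 2 * sigma ^ 2 * m = (mu - r) ^ 2 := by rw [hm]; field_simp
  apply mul_left_cancel₀ hσd
  linear_combination 2 * sigma ^ 2 * hroot + d * hm' - d * (mu - r) * hx

lemma lending_P_eq (hrate : 2 * (r * d - lam) = d * x * (mu - r))
    (hwl : r * (1 + x) * wl = x * c) :
    r * d * (2 * c - (mu + r) * wl) = 2 * lam * (c - r * wl) := by
  linear_combination (c - r * wl) * hrate - d * (mu - r) * hwl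

lemma lending_Q_eq (hr : r ≠ 0) (hd : d ≠ 0) (hrate : 2 * (r * d - lam) = d * x * (mu - r))
    (hx : sigma ^ 2 * (d - 1) * x = mu - r) (hwl : r * (1 + x) * wl = x * c) :
    (2 * lam - (mu + r)) * sigma ^ 2 * wl - (mu - r) * (2 * c - (mu + r) * wl)
      = -(sigma ^ 2 * wl * (mu - r) * (1 + x)) := by
  apply mul_left_cancel₀ (mul_ne_zero hr hd)
  linear_combination -(mu - r) * lending_P_eq hrate hwl - r * sigma ^ 2 * wl * hrate
    + 2 * lam * sigma ^ 2 * (d - 1) * hwl + 2 * lam * (c - r * wl) * hx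

lemma lending_x_pos (hmu : r < mu) (hd1 : 1 < d)
    (hx : sigma ^ 2 * (d - 1) * x = mu - r) : 0 < x :=
  pos_of_mul_pos_right (hx.trans_gt (sub_pos.mpr hmu)) (by nlinarith)

lemma lending_c_sub_pos (hc : 0 < c) (hx0 : 0 < x) (hwl : r * (1 + x) * wl = x * c) :
    0 < c - r * wl :=
  pos_of_mul_pos_right (a := 1 + x) (by linear_combination hc + hwl) (by positivity)

lemma lending_P_pos (hr : 0 < r) (hlam : 0 < lam) (hc : 0 < c) (hd : 0 < d)
    (hx0 : 0 < x) (hrate : 2 * (r * d - lam) = d * x * (mu - r))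
    (hwl : r * (1 + x) * wl = x * c) : ∀ w ∈ Icc 0 wl, 0 < 2 * c - (mu + r) * w := by
  have hend : 0 < r * d * (2 * c - (mu + r) * wl) := by
    rw [lending_P_eq hrate hwl]
    exact mul_pos (by positivity) (lending_c_sub_pos hc hx0 hwl)
  have hend' := pos_of_mul_pos_right hend (by positivity)
  intro w hw
  linarith [add_mul_neg_of_neg_of_neg (p := -(2 * c)) (q := mu + r) (by linarith) (by linarith) hw]

lemma lending_Q_neg (hr : 0 < r) (hmu : r < mu) (hs : 0 < sigma) (hc : 0 < c) (hd : 0 < d)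
    (hx0 : 0 < x) (hrate : 2 * (r * d - lam) = d * x * (mu - r))
    (hx : sigma ^ 2 * (d - 1) * x = mu - r) (hwl : r * (1 + x) * wl = x * c) :
    ∀ w ∈ Icc 0 wl,
      (2 * lam - (mu + r)) * sigma ^ 2 * w - (mu - r) * (2 * c - (mu + r) * w) < 0 := by
  have hwl0 : 0 < wl := pos_of_mul_pos_right (hwl.trans_gt (by positivity)) (by positivity)
  have hend := lending_Q_eq hr.ne' hd.ne' hrate hx hwl
  have hend' : 0 < sigma ^ 2 * wl * (mu - r) * (1 + x) := by
    have := sub_pos.mpr hmu; positivity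
  intro w hw
  have := add_mul_neg_of_neg_of_neg (p := -(2 * c * (mu - r)))
    (q := (2 * lam - (mu + r)) * sigma ^ 2 + (mu - r) * (mu + r))
    (neg_neg_of_pos (by have := sub_pos.mpr hmu; positivity)) (by linarith) hw
  linarith

lemma boundary_G_eq_zero {H H' : ℝ} (hr : r ≠ 0) (hd : d ≠ 0) (hH' : H' ≠ 0)
    (hbd : H / H' = -(1 / d) * (c / r - wl))
    (hkey : r * d * (2 * c - (mu + r) * wl) = 2 * lam * (c - r * wl)) :
    2 * lam * H + (2 * c - (mu + r) * wl) * H' = 0 := by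
  rw [div_eq_iff hH'] at hbd
  apply mul_left_cancel₀ (mul_ne_zero hr hd)
  field_simp at hbd
  linear_combination 2 * lam * hbd + H' * hkey

end LendingLevel

lemma hasDerivAt_add_affine_mul_deriv {h : ℝ → ℝ} {u : ℝ} (k p q : ℝ)
    (h1 : DifferentiableAt ℝ h u) (h2 : DifferentiableAt ℝ (deriv h) u) :
    HasDerivAt (fun v => k * h v + (p - q * v) * deriv h v)
      (k * deriv h u - q * deriv h u + (p - q * u) * deriv (deriv h) u) u :=
  ((h1.hasDerivAt.const_mul k).add
    ((((hasDerivAt_id u).const_mul q).const_sub p).mul h2.hasDerivAt)).congr_deriv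
    (by simp only [id]; ring)

lemma first_order_condition_nonpos {r mu sigma lam c wl : ℝ} {h : ℝ → ℝ} (hmu : r < mu) (hwl : 0 < wl)
    (hC2 : ContDiffOn ℝ 2 h (Icc 0 wl))
    (hneg : ∀ w ∈ Icc 0 wl, deriv h w < 0)
    (hode : ∀ w ∈ Icc 0 wl,
      lam * h w = (mu * w - c) * deriv h w + (1/2) * sigma^2 * w^2 * deriv (deriv h) w)
    (hP : ∀ w ∈ Icc 0 wl, 0 < 2 * c - (mu + r) * w)
    (hQ : ∀ w ∈ Icc 0 wl,
      (2 * lam - (mu + r)) * sigma ^ 2 * w - (mu - r) * (2 * c - (mu + r) * w) < 0)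
    (hGwl : 2 * lam * h wl + (2 * c - (mu + r) * wl) * deriv h wl = 0) :
    ∀ w ∈ Icc 0 wl, (mu - r) * deriv h w + sigma ^ 2 * w * deriv (deriv h) w ≤ 0 := by
  set G := fun u => 2 * lam * h u + (2 * c - (mu + r) * u) * deriv h u
  have hdiff : ∀ w ∈ Icc 0 wl, DifferentiableAt ℝ h w := fun w hw =>
    differentiableAt_of_deriv_ne_zero (hneg w hw).ne
  have hGcont : ContinuousOn G (Icc 0 wl) :=
    (continuousOn_const.mul hC2.continuousOn).add
      ((continuousOn_const.sub (continuousOn_const.mul continuousOn_id)).mul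
        (continuousOn_deriv_Icc hwl hC2 one_le_two hdiff))
  have hGderiv : ∀ u ∈ Ioo 0 wl, 0 < G u → 0 < deriv G u := by
    intro u hu hGu
    have hu' : u ∈ Icc 0 wl := Ioo_subset_Icc_self hu
    have h2 : DifferentiableAt ℝ (deriv h) u :=
      ((hC2.mono Ioo_subset_Icc_self).deriv_of_isOpen (m := 1) isOpen_Ioo (by norm_num))
        |>.differentiableOn one_ne_zero u hu |>.differentiableAt (isOpen_Ioo.mem_nhds hu)
    rw [(hasDerivAt_add_affine_mul_deriv (2 * lam) (2 * c) (mu + r) (hdiff u hu') h2).deriv]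
    have hid : sigma ^ 2 * u ^ 2 * (2 * lam * deriv h u - (mu + r) * deriv h u
        + (2 * c - (mu + r) * u) * deriv (deriv h) u) = (2 * c - (mu + r) * u) * G u
        + u * deriv h u * ((2 * lam - (mu + r)) * sigma ^ 2 * u
          - (mu - r) * (2 * c - (mu + r) * u)) := by
      linear_combination (-2 * (2 * c - (mu + r) * u)) * hode u hu'
    have hrhs : 0 < (2 * c - (mu + r) * u) * G u + u * deriv h u * ((2 * lam - (mu + r))
        * sigma ^ 2 * u - (mu - r) * (2 * c - (mu + r) * u)) :=
      add_pos (mul_pos (hP u hu') hGu)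
        (mul_pos_of_neg_of_neg (mul_neg_of_pos_of_neg hu.1 (hneg u hu')) (hQ u hu'))
    exact pos_of_mul_pos_right (hid ▸ hrhs) (by positivity)
  have hGle := nonpos_on_Icc_of_deriv_pos_of_pos hGcont hGderiv hGwl.le
  intro w hw
  rcases hw.1.eq_or_lt with rfl | hw0
  · simpa using (mul_neg_of_pos_of_neg (sub_pos.mpr hmu) (hneg 0 hw)).le
  · have hwG : w * ((mu - r) * deriv h w + sigma ^ 2 * w * deriv (deriv h) w) = G w := by
      linear_combination -2 * hode w hw
    exact nonpos_of_mul_nonpos_right (hwG ▸ hGle w hw) hw0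

theorem stmt_7_general (r mu sigma lam c m d x wl : ℝ)
    (hr : 0 < r) (hmu : r < mu) (hs : 0 < sigma) (hlam : 0 < lam) (hc : 0 < c)
    (hm : m = (mu - r)^2 / (2 * sigma^2))
    (hd : d = ((r + lam + m) + Real.sqrt ((r + lam + m)^2 - 4*r*lam)) / (2*r))
    (hx : x = (mu - r) / (sigma^2 * (d - 1)))
    (hwl : wl = (x / (1 + x)) * (c / r))
    (h : ℝ → ℝ)
    (hC2 : ContDiffOn ℝ 2 h (Set.Icc 0 wl))
    (hneg : ∀ w ∈ Set.Icc 0 wl, deriv h w < 0)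
    (hode : ∀ w ∈ Set.Icc 0 wl,
      lam * h w = (mu * w - c) * deriv h w + (1/2) * sigma^2 * w^2 * deriv (deriv h) w)
    (hbd : h wl / deriv h wl = -(1/d) * (c/r - wl)) :
    ∀ w ∈ Set.Icc 0 wl,
      IsMinOn (fun α : ℝ => (mu - r) * α * deriv h w + (1/2) * sigma^2 * α^2 * deriv (deriv h) w)
        (Set.Icc 0 w) w ∧
      (mu - r) * deriv h w + sigma^2 * w * deriv (deriv h) w ≤ 0 := by
  have hm0 : 0 < m := by rw [hm]; have := sub_pos.mpr hmu; positivity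
  obtain ⟨hroot, hvertex⟩ := larger_root_spec hr
    (by nlinarith [sq_nonneg (r - lam), mul_pos hm0 (add_pos hr hlam)]) hd
  have hd1 : 1 < d := lt_of_quadratic_eq_zero_of_neg hr.le hroot hvertex (by linarith)
  have hx' : sigma ^ 2 * (d - 1) * x = mu - r := by
    rw [hx, mul_div_cancel₀ _ (by have := sub_pos.mpr hd1; positivity)]
  have hx0 := lending_x_pos hmu hd1 hx'
  have hwl' : r * (1 + x) * wl = x * c := by rw [hwl]; field_simp
  have hrate := two_mul_sub_lam_eq_of_root hs hd1 hroot hm hx'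
  have hd0 : 0 < d := by linarith
  have hwl0 : 0 < wl := by rw [hwl]; positivity
  have hfirst := first_order_condition_nonpos hmu hwl0 hC2 hneg hode
    (lending_P_pos hr hlam hc hd0 hx0 hrate hwl')
    (lending_Q_neg hr hmu hs hc hd0 hx0 hrate hx' hwl')
    (boundary_G_eq_zero hr.ne' hd0.ne' (hneg wl ⟨hwl0.le, le_rfl⟩).ne hbd
      (lending_P_eq hrate hwl'))
  intro w hw
  refine ⟨?_, hfirst w hw⟩
  convert isMinOn_quadratic_Icc (w := w) (a := (mu - r) * deriv h w)
    (b := (1/2) * sigma ^ 2 * deriv (deriv h) w)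
    (mul_neg_of_pos_of_neg (sub_pos.mpr hmu) (hneg w hw)).le (by linarith [hfirst w hw])
    using 2 with α
  ring

theorem stmt_7 (r mu sigma lam c m d x wl : ℝ)
    (hr : 0 < r) (hmu : r < mu) (hs : 0 < sigma) (hlam : 0 < lam) (hc : 0 < c)
    (hm : m = (mu - r)^2 / (2 * sigma^2))
    (hd : d = ((r + lam + m) + Real.sqrt ((r + lam + m)^2 - 4*r*lam)) / (2*r))
    (hx : x = (mu - r) / (sigma^2 * (d - 1)))
    (hwl : wl = (x / (1 + x)) * (c / r))
    (h : ℝ → ℝ)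
    (hC2 : ContDiffOn ℝ 2 h (Set.Icc 0 wl))
    (hpos : ∀ w ∈ Set.Icc 0 wl, 0 < h w)
    (hneg : ∀ w ∈ Set.Icc 0 wl, deriv h w < 0)
    (hode : ∀ w ∈ Set.Icc 0 wl,
      lam * h w = (mu * w - c) * deriv h w + (1/2) * sigma^2 * w^2 * deriv (deriv h) w)
    (h0 : h 0 = 1)
    (hbd : h wl / deriv h wl = -(1/d) * (c/r - wl)) :
    ∀ w ∈ Set.Icc 0 wl,
      IsMinOn (fun α : ℝ => (mu - r) * α * deriv h w + (1/2) * sigma^2 * α^2 * deriv (deriv h) w)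
        (Set.Icc 0 w) w ∧
      (mu - r) * deriv h w + sigma^2 * w * deriv (deriv h) w ≤ 0 :=
  stmt_7_general r mu sigma lam c m d x wl hr hmu hs hlam hc hm hd hx hwl h hC2 hneg hode hbd
end

section
/- Let p > r and a_r := ((r−p+λ+m) + √((r−p+λ+m)² + 4λ(p−r)))/(2(p−r)), and assume (μ−r)/(σ²(a_r+1)) < 1. Let w₀ > 0 and define g(w) := (w/w₀)^{−a_r} for w > 0. Then for every w > 0 and every γ ∈ [0, w], one has [rw + (μ−r)γ − pw]·g′(w) + (1/2)σ²γ²·g″(w) − λ·g(w) ≥ 0, with equality if and only if γ = ((μ−r)/(σ²(a_r+1)))·w. -/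
/-!
The function `g w = (w / w₀) ^ (-a)` satisfies `w g' = -a g` and `w² g'' = a (a + 1) g`, so the
Hamilton–Jacobi–Bellman expression equals `g / w²` times a quadratic polynomial in `γ`. Because
`a = a_r` is the positive root of `(p - r) a² - (r - p + λ + m) a - λ = 0`, that quadratic is a
perfect square, `σ² a (a + 1) / 2 · (γ - γ*)²`, which is nonnegative and vanishes exactly at the
optimal investment `γ*`.
-/

open Filter Topology

section QuadraticRoot

variable {c b lam a : ℝ}

theorem quadratic_eq_zero_of_eq_root_s8 (hc : 0 < c) (hlam : 0 ≤ lam)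
    (ha : a = (b + Real.sqrt (b ^ 2 + 4 * lam * c)) / (2 * c)) :
    c * a ^ 2 - b * a - lam = 0 := by
  have hroot : 2 * c * a - b = Real.sqrt (b ^ 2 + 4 * lam * c) := by
    rw [ha]; field_simp; ring
  have hsq : (2 * c * a - b) ^ 2 = b ^ 2 + 4 * lam * c := by
    rw [hroot, Real.sq_sqrt (by positivity)]
  have : 4 * c * (c * a ^ 2 - b * a - lam) = 0 := by linear_combination hsq
  simpa [hc.ne'] using this

theorem pos_of_eq_quadratic_root (hc : 0 < c) (hlam : 0 < lam)
    (ha : a = (b + Real.sqrt (b ^ 2 + 4 * lam * c)) / (2 * c)) :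
    0 < a := by
  have hb : |b| < Real.sqrt (b ^ 2 + 4 * lam * c) := by
    rw [← Real.sqrt_sq_eq_abs]
    exact Real.sqrt_lt_sqrt (sq_nonneg b) (by nlinarith)
  rw [ha]
  exact div_pos (by linarith [neg_le_abs b]) (by positivity)

end QuadraticRoot

section ScaledPower

variable {c s x : ℝ}

theorem hasDerivAt_div_rpow (hc : c ≠ 0) (hx : x ≠ 0) :
    HasDerivAt (fun y => (y / c) ^ s) (s * (x / c) ^ s / x) x := by
  have hxc : x / c ≠ 0 := div_ne_zero hx hc
  convert ((hasDerivAt_id' x).div_const c).rpow_const (p := s) (Or.inl hxc) using 1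
  rw [Real.rpow_sub_one hxc]
  field_simp

theorem deriv_deriv_div_rpow (hc : c ≠ 0) (hx : x ≠ 0) :
    deriv (deriv fun y => (y / c) ^ s) x = s * (s - 1) * (x / c) ^ s / x ^ 2 := by
  have hderiv : deriv (fun y => (y / c) ^ s) =ᶠ[𝓝 x] fun y => s * (y / c) ^ s / y := by
    filter_upwards [isOpen_ne.mem_nhds hx] with y hy
    exact (hasDerivAt_div_rpow hc hy).deriv
  rw [hderiv.deriv_eq, (((hasDerivAt_div_rpow hc hx).const_mul s).fun_div (hasDerivAt_id' x) hx).deriv]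
  field_simp

end ScaledPower

theorem hjb_eq_mul_sq {r mu sigma lam p m a w γ G : ℝ} (hs : sigma ≠ 0) (ha : a + 1 ≠ 0)
    (hw : w ≠ 0) (hm : m = (mu - r) ^ 2 / (2 * sigma ^ 2))
    (hquad : (p - r) * a ^ 2 - (r - p + lam + m) * a - lam = 0) :
    (r * w + (mu - r) * γ - p * w) * (-a * G / w)
        + (1 / 2) * sigma ^ 2 * γ ^ 2 * (-a * (-a - 1) * G / w ^ 2) - lam * G
      = G * (sigma ^ 2 * a * (a + 1) / (2 * w ^ 2))
          * (γ - (mu - r) / (sigma ^ 2 * (a + 1)) * w) ^ 2 := by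
  have hm2 : (mu - r) ^ 2 = 2 * sigma ^ 2 * m := by rw [hm]; field_simp
  field_simp
  linear_combination (2 * G * sigma ^ 2 * w ^ 2) * hquad - (a * G * w ^ 2) * hm2

theorem stmt_8_general (r mu sigma lam p m ar w0 : ℝ)
    (hs : 0 < sigma) (hlam : 0 < lam) (hp : r < p)
    (hm : m = (mu - r)^2 / (2 * sigma^2))
    (har : ar = ((r - p + lam + m) + Real.sqrt ((r - p + lam + m)^2 + 4*lam*(p - r)))
            / (2*(p - r)))
    (hw0 : 0 < w0)
    (g : ℝ → ℝ) (hg : ∀ w, g w = (w / w0) ^ (-ar)) :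
    ∀ w : ℝ, 0 < w → ∀ γ ∈ Set.Icc 0 w,
      0 ≤ (r * w + (mu - r) * γ - p * w) * deriv g w
            + (1/2) * sigma^2 * γ^2 * deriv (deriv g) w - lam * g w ∧
      ((r * w + (mu - r) * γ - p * w) * deriv g w
            + (1/2) * sigma^2 * γ^2 * deriv (deriv g) w - lam * g w = 0
        ↔ γ = ((mu - r) / (sigma^2 * (ar + 1))) * w) := by
  intro w hw γ _
  obtain rfl : g = fun w => (w / w0) ^ (-ar) := funext hg
  have hpr : 0 < p - r := sub_pos.mpr hp
  have har_pos : 0 < ar := pos_of_eq_quadratic_root hpr hlam har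
  have hquad := quadratic_eq_zero_of_eq_root_s8 hpr hlam.le har
  rw [(hasDerivAt_div_rpow hw0.ne' hw.ne').deriv, deriv_deriv_div_rpow hw0.ne' hw.ne',
    hjb_eq_mul_sq hs.ne' (by positivity) hw.ne' hm hquad]
  have hcoeff : 0 < (w / w0) ^ (-ar) * (sigma ^ 2 * ar * (ar + 1) / (2 * w ^ 2)) := by
    positivity
  exact ⟨by positivity, by simp [hcoeff.ne', sub_eq_zero]⟩

theorem stmt_8 (r mu sigma lam p m ar w0 : ℝ)
    (hr : 0 < r) (hmu : r < mu) (hs : 0 < sigma) (hlam : 0 < lam) (hp : r < p)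
    (hm : m = (mu - r)^2 / (2 * sigma^2))
    (har : ar = ((r - p + lam + m) + Real.sqrt ((r - p + lam + m)^2 + 4*lam*(p - r)))
            / (2*(p - r)))
    (hcase : (mu - r) / (sigma^2 * (ar + 1)) < 1)
    (hw0 : 0 < w0)
    (g : ℝ → ℝ) (hg : ∀ w, g w = (w / w0) ^ (-ar)) :
    ∀ w : ℝ, 0 < w → ∀ γ ∈ Set.Icc 0 w,
      0 ≤ (r * w + (mu - r) * γ - p * w) * deriv g w
            + (1/2) * sigma^2 * γ^2 * deriv (deriv g) w - lam * g w ∧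
      ((r * w + (mu - r) * γ - p * w) * deriv g w
            + (1/2) * sigma^2 * γ^2 * deriv (deriv g) w - lam * g w = 0
        ↔ γ = ((mu - r) / (sigma^2 * (ar + 1))) * w) :=
  stmt_8_general r mu sigma lam p m ar w0 hs hlam hp hm har hw0 g hg
end

section
/- Let r > 0, μ > r, σ > 0, λ > 0, p > r, and set q := min(μ, p). For b ∈ [r, q) define m_b := (μ−b)²/(2σ²) and a_b := ((b−p+λ+m_b) + √((b−p+λ+m_b)² + 4λ(p−b)))/(2(p−b)). Then a_b → a_r as b → r⁺, where a_r is a_b evaluated at b = r, and (μ−b)/(σ²(a_b+1)) → 0 as b → q⁻. -/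
open Filter Topology

/-!
Write `a_b = (x_b + √(x_b² + 4λ(p - b))) / (2(p - b))` with `x_b = b - p + λ + m_b` continuous.
For `b < p` this is continuous in `b` and positive, since `√(x² + 4λ(p - b)) > |x|`. Hence
`a_b → a_r` at `r < p`. If `μ < p`, the quotient `(μ - b) / (σ²(a_b + 1))` is continuous at
`q = μ`, where it vanishes. If `p ≤ μ`, then `x_p = λ + m_p > 0`, so the numerator of `a_b`
tends to `2 x_p > 0` while the denominator tends to `0⁺`: `a_b → ∞` and the quotient tends to
`(μ - p) / ∞ = 0`.
-/

/-- The positive root of `(p - b) a² - x_b a - λ = 0`. -/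
noncomputable def rootCoeff (x : ℝ → ℝ) (lam p b : ℝ) : ℝ :=
  (x b + √(x b ^ 2 + 4 * lam * (p - b))) / (2 * (p - b))

section
variable {x : ℝ → ℝ} {lam p b : ℝ}

lemma continuousAt_rootCoeff (hx : ContinuousAt x b) (hb : b < p) :
    ContinuousAt (rootCoeff x lam p) b :=
  (hx.add (hx.pow 2 |>.add (by fun_prop)).sqrt).div (by fun_prop) (by linarith)

lemma rootCoeff_pos (hlam : 0 < lam) (hb : b < p) : 0 < rootCoeff x lam p b := by
  have hroot : |x b| < √(x b ^ 2 + 4 * lam * (p - b)) := by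
    rw [← Real.sqrt_sq_eq_abs]
    exact Real.sqrt_lt_sqrt (sq_nonneg _) (by nlinarith)
  exact div_pos (by linarith [neg_abs_le (x b)]) (by linarith)

lemma tendsto_two_mul_sub_nhdsLT (p : ℝ) :
    Tendsto (fun b => 2 * (p - b)) (𝓝[<] p) (𝓝[>] 0) := by
  refine tendsto_nhdsWithin_of_tendsto_nhds_of_eventually_within _ ?_ ?_
  · have h : ContinuousAt (fun b : ℝ => 2 * (p - b)) p := by fun_prop
    simpa using h.tendsto.mono_left nhdsWithin_le_nhds
  · filter_upwards [self_mem_nhdsWithin] with b (hb : b < p)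
    exact mul_pos two_pos (sub_pos.mpr hb)

lemma tendsto_rootCoeff_atTop (hx : ContinuousAt x p) (hxp : 0 < x p) :
    Tendsto (rootCoeff x lam p) (𝓝[<] p) atTop := by
  have hnum : Tendsto (fun b => x b + √(x b ^ 2 + 4 * lam * (p - b))) (𝓝[<] p)
      (𝓝 (2 * x p)) := by
    have h : ContinuousAt (fun b => x b + √(x b ^ 2 + 4 * lam * (p - b))) p :=
      hx.add (hx.pow 2 |>.add (by fun_prop)).sqrt
    simpa [Real.sqrt_sq hxp.le, two_mul] using h.tendsto.mono_left nhdsWithin_le_nhds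
  have hden := (tendsto_two_mul_sub_nhdsLT p).inv_tendsto_nhdsGT_zero
  exact (hnum.pos_mul_atTop (by linarith) hden).congr fun b => (div_eq_mul_inv _ _).symm
end

theorem stmt_13_general (r mu sigma lam p : ℝ)
    (hs : 0 < sigma) (hlam : 0 < lam) (hp : r < p)
    (q : ℝ) (hq : q = min mu p)
    (mb a : ℝ → ℝ)
    (hmb : ∀ b, mb b = (mu - b)^2 / (2 * sigma^2))
    (ha : ∀ b, a b = ((b - p + lam + mb b)
            + Real.sqrt ((b - p + lam + mb b)^2 + 4*lam*(p - b))) / (2*(p - b))) :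
    Tendsto a (𝓝[>] r) (𝓝 (a r)) ∧
    Tendsto (fun b => (mu - b) / (sigma^2 * (a b + 1))) (𝓝[<] q) (𝓝 0) := by
  set x : ℝ → ℝ := fun b => b - p + lam + mb b
  obtain rfl : a = rootCoeff x lam p := funext ha
  have hx : Continuous x := by simp only [x, funext hmb]; fun_prop
  have hsigma : 0 < sigma ^ 2 := by positivity
  refine ⟨(continuousAt_rootCoeff hx.continuousAt hp).continuousWithinAt, ?_⟩
  rcases le_or_gt p mu with hpmu | hmup
  · rw [hq, min_eq_right hpmu]
    have hxp : 0 < x p := by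
      have : 0 ≤ mb p := by rw [hmb]; positivity
      simp only [x]; linarith
    have hden := ((tendsto_rootCoeff_atTop (lam := lam) hx.continuousAt hxp).atTop_add
      (tendsto_const_nhds (x := (1 : ℝ)))).const_mul_atTop hsigma
    exact (tendsto_const_nhds.sub (tendsto_id.mono_left nhdsWithin_le_nhds)).div_atTop hden
  · rw [hq, min_eq_left hmup.le]
    have hc : ContinuousAt (fun b => (mu - b) / (sigma ^ 2 * (rootCoeff x lam p b + 1))) mu :=
      (continuousAt_const.sub continuousAt_id).div
        (continuousAt_const.mul
          ((continuousAt_rootCoeff hx.continuousAt hmup).add continuousAt_const))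
        (by have := rootCoeff_pos (x := x) hlam hmup; positivity)
    simpa using hc.tendsto.mono_left (nhdsWithin_le_nhds (s := Set.Iio mu))

theorem stmt_13 (r mu sigma lam p : ℝ)
    (hr : 0 < r) (hmu : r < mu) (hs : 0 < sigma) (hlam : 0 < lam) (hp : r < p)
    (q : ℝ) (hq : q = min mu p)
    (mb a : ℝ → ℝ)
    (hmb : ∀ b, mb b = (mu - b)^2 / (2 * sigma^2))
    (ha : ∀ b, a b = ((b - p + lam + mb b)
            + Real.sqrt ((b - p + lam + mb b)^2 + 4*lam*(p - b))) / (2*(p - b))) :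
    Tendsto a (𝓝[>] r) (𝓝 (a r)) ∧
    Tendsto (fun b => (mu - b) / (sigma^2 * (a b + 1))) (𝓝[<] q) (𝓝 0) :=
  stmt_13_general r mu sigma lam p hs hlam hp q hq mb a hmb ha
end

section
/- Let r < b < μ. Let y : [0, w_l] → ℝ be continuously differentiable and satisfy σ²w²(y′(w) − 1) = −2λy(w)² + 2(μw − c)y(w) for all w ∈ [0, w_l], with y(0) = −c/λ and y(w_l) = −(1/d)·(c/r − w_l). Then there exists a unique w_b ∈ (0, w_l) such that y(w_b) = ((μ+b)/(2λ))·w_b − c/λ, i.e., y(w_b) = z_b(w_b) where z_b(w) := ((μ+b)/(2λ))w − c/λ. -/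
/-!
Put `g = y - z_b`. Then `g 0 = 0`, and dividing the equation by `w` and letting `w → 0` gives
`y'(0) = μ/λ`, so `g'(0) = (μ - b)/(2λ) > 0`; the relation `r d² - (r + λ + m) d + λ = 0` shows
`g w_l < 0`, and the intermediate value theorem yields a zero in `(0, w_l)`.
Because `z_b` is chosen so that `-2λ z_b + 2(μw - c) = (μ - b) w`, the Riccati equation becomes a
linear equation `g' = h + k g` whose source `h w = 1 - A + (μ - b)/σ² · (A - c/(λw))`, with
`A = (μ + b)/(2λ)` the slope of `z_b`, is strictly increasing. With the integrating factor, `g`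
has the sign of `h` just after each of its zeros. If `a < b'` were two zeros, then either
`h b' ≤ 0`, so `h < 0` on `(a, b')` and `g b' < 0`, or `h b' > 0`, so `h > 0` on `(b', w_l)`
and `g w_l > 0`: both are absurd.
-/

open Set Filter Topology Real

section LinearODE

variable {g h k : ℝ → ℝ} {a b : ℝ}

theorem pos_of_hasDerivAt_linear_of_source_pos (hab : a < b) (hg : ContinuousOn g (Icc a b))
    (hk : ContinuousOn k (Icc a b)) (hg' : ∀ w ∈ Ioo a b, HasDerivAt g (h w + k w * g w) w)
    (hh : ∀ w ∈ Ioo a b, 0 < h w) (ha : g a = 0) : 0 < g b := by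
  set K : ℝ → ℝ := fun w => ∫ t in a..w, k t
  have hK : ∀ w ∈ Ioo a b, HasDerivAt K (k w) w := fun w hw =>
    intervalIntegral.integral_hasDerivAt_right
      ((hk.mono (Icc_subset_Icc_right hw.2.le)).intervalIntegrable_of_Icc hw.1.le)
      ((hk.mono Ioo_subset_Icc_self).stronglyMeasurableAtFilter isOpen_Ioo w hw)
      (hk.continuousAt (Icc_mem_nhds hw.1 hw.2))
  have hKc : ContinuousOn K (Icc a b) := by
    simpa only [uIcc_of_le hab.le] using
      intervalIntegral.continuousOn_primitive_interval (μ := MeasureTheory.volume)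
        (hk.integrableOn_Icc.mono_set (uIcc_of_le hab.le).subset)
  -- the integrating factor `exp (-K)` turns the equation into `(g * exp (-K))' = h * exp (-K)`
  have hmono : StrictMonoOn (fun w => g w * exp (-K w)) (Icc a b) := by
    refine strictMonoOn_of_deriv_pos (convex_Icc a b) (hg.mul hKc.neg.rexp) fun w hw => ?_
    rw [interior_Icc] at hw
    have hG : HasDerivAt (fun w => g w * exp (-K w)) (h w * exp (-K w)) w :=
      ((hg' w hw).mul (hK w hw).neg.exp).congr_deriv (by rw [Pi.neg_apply]; ring)
    rw [hG.deriv]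
    exact mul_pos (hh w hw) (exp_pos _)
  have := hmono (left_mem_Icc.2 hab.le) (right_mem_Icc.2 hab.le) hab
  simp only [ha, zero_mul] at this
  exact pos_of_mul_pos_left this (exp_pos _).le

theorem neg_of_hasDerivAt_linear_of_source_neg (hab : a < b) (hg : ContinuousOn g (Icc a b))
    (hk : ContinuousOn k (Icc a b)) (hg' : ∀ w ∈ Ioo a b, HasDerivAt g (h w + k w * g w) w)
    (hh : ∀ w ∈ Ioo a b, h w < 0) (ha : g a = 0) : g b < 0 := by
  have := pos_of_hasDerivAt_linear_of_source_pos (g := -g) (h := -h) hab hg.neg hk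
    (fun w hw => by simpa [add_comm, mul_neg] using (hg' w hw).neg)
    (fun w hw => neg_pos.2 (hh w hw)) (by simp [ha])
  simpa using this

theorem subsingleton_zeros_of_hasDerivAt_linear {p q : ℝ} (hg : ContinuousOn g (Ioc p q))
    (hk : ContinuousOn k (Ioc p q)) (hg' : ∀ w ∈ Ioo p q, HasDerivAt g (h w + k w * g w) w)
    (hh : StrictMonoOn h (Ioo p q)) (hq : g q < 0) :
    {w ∈ Ioo p q | g w = 0}.Subsingleton := by
  suffices ∀ u ∈ Ioo p q, ∀ v ∈ Ioo p q, u < v → g u = 0 → g v = 0 → False by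
    rintro u ⟨hu, hgu⟩ v ⟨hv, hgv⟩
    by_contra hne
    rcases lt_or_gt_of_ne hne with huv | hvu
    · exact this u hu v hv huv hgu hgv
    · exact this v hv u hu hvu hgv hgu
  intro u hu v hv huv hgu hgv
  rcases le_or_gt (h v) 0 with hhv | hhv
  · have huv' : Icc u v ⊆ Ioc p q := Icc_subset_Ioc hu.1 hv.2.le
    have := neg_of_hasDerivAt_linear_of_source_neg huv (hg.mono huv') (hk.mono huv')
      (fun w hw => hg' w ⟨hu.1.trans hw.1, hw.2.trans hv.2⟩)
      (fun w hw => (hh ⟨hu.1.trans hw.1, hw.2.trans hv.2⟩ hv hw.2).trans_le hhv) hgu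
    exact this.ne hgv
  · have hvq : Icc v q ⊆ Ioc p q := Icc_subset_Ioc hv.1 le_rfl
    have := pos_of_hasDerivAt_linear_of_source_pos hv.2 (hg.mono hvq) (hk.mono hvq)
      (fun w hw => hg' w ⟨hv.1.trans hw.1, hw.2⟩)
      (fun w hw => hhv.trans (hh hv ⟨hv.1.trans hw.1, hw.2⟩ hw.1)) hgv
    exact this.not_gt hq

end LinearODE

theorem eventually_pos_of_hasDerivWithinAt_Ioi {g : ℝ → ℝ} {a g' : ℝ}
    (hd : HasDerivWithinAt g g' (Ioi a) a) (hg' : 0 < g') (ha : g a = 0) :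
    ∀ᶠ w in 𝓝[>] a, 0 < g w := by
  filter_upwards [((hasDerivWithinAt_iff_tendsto_slope' (lt_irrefl a)).1 hd).eventually
    (eventually_gt_nhds hg'), self_mem_nhdsWithin] with w hslope hw
  rw [slope_def_field, ha, sub_zero] at hslope
  exact (div_pos_iff_of_pos_right (sub_pos.2 hw)).1 hslope

theorem exists_mem_Ioo_eq_zero_of_hasDerivWithinAt_pos {g : ℝ → ℝ} {a b g' : ℝ} (hab : a < b)
    (hg : ContinuousOn g (Icc a b)) (hd : HasDerivWithinAt g g' (Ioi a) a) (hg' : 0 < g')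
    (ha : g a = 0) (hb : g b < 0) : ∃ w ∈ Ioo a b, g w = 0 := by
  obtain ⟨w₀, hgw₀, hw₀⟩ := ((eventually_pos_of_hasDerivWithinAt_Ioi hd hg' ha).and
    (Ioo_mem_nhdsGT hab)).exists
  obtain ⟨w, hw, hgw⟩ := intermediate_value_Ioo' hw₀.2.le
    (hg.mono (Icc_subset_Icc_left hw₀.1.le)) ⟨hb, hgw₀⟩
  exact ⟨w, ⟨hw₀.1.trans hw.1, hw.2⟩, hgw⟩

theorem ContDiffOn.hasDerivWithinAt_Ioi_left {f : ℝ → ℝ} {a b : ℝ}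
    (hf : ContDiffOn ℝ 1 f (Icc a b)) (hab : a < b) :
    HasDerivWithinAt f (derivWithin f (Icc a b) a) (Ioi a) a :=
  (hf.differentiableOn one_ne_zero a (left_mem_Icc.2 hab.le)).hasDerivWithinAt
    |>.mono_of_mem_nhdsWithin (Icc_mem_nhdsGT hab)

theorem ContDiffOn.tendsto_deriv_nhdsGT {f : ℝ → ℝ} {a b : ℝ}
    (hf : ContDiffOn ℝ 1 f (Icc a b)) (hab : a < b) :
    Tendsto (deriv f) (𝓝[>] a) (𝓝 (derivWithin f (Icc a b) a)) := by
  have h := (hf.continuousOn_derivWithin (uniqueDiffOn_Icc hab) le_rfl) a (left_mem_Icc.2 hab.le)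
  rw [← nhdsWithin_Ioo_eq_nhdsGT hab]
  refine (h.mono_left (nhdsWithin_mono _ Ioo_subset_Icc_self)).congr' ?_
  filter_upwards [self_mem_nhdsWithin] with w hw
  exact derivWithin_of_mem_nhds (Icc_mem_nhds hw.1 hw.2)

theorem quadratic_and_one_lt_of_eq_root {r lam m d : ℝ} (hr : 0 < r) (hlam : 0 < lam) (hm : 0 < m)
    (hd : d = ((r + lam + m) + √((r + lam + m)^2 - 4*r*lam)) / (2*r)) :
    r * d^2 - (r + lam + m) * d + lam = 0 ∧ 1 < d := by
  set s := √((r + lam + m)^2 - 4*r*lam)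
  have hs : s^2 = (r + lam + m)^2 - 4*r*lam :=
    sq_sqrt (by nlinarith [sq_nonneg (r - lam), mul_pos hr hm, mul_pos hlam hm])
  have hs0 : 0 ≤ s := sqrt_nonneg _
  have hrd : 2 * r * d = r + lam + m + s := by rw [hd]; field_simp
  constructor
  · have : 4 * r * (r * d^2 - (r + lam + m) * d + lam) = 0 := by
      linear_combination (2 * r * d - (r + lam + m) + s) * hrd + hs
    simpa [hr.ne'] using this
  · by_contra! hd1
    have h1 : s ≤ r - lam - m := by nlinarith
    nlinarith [mul_pos hr hm, mul_le_mul h1 h1 hs0 (hs0.trans h1)]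

noncomputable def borrowingLine (mu b lam c w : ℝ) : ℝ := (mu + b) / (2 * lam) * w - c / lam

theorem hasDerivAt_borrowingLine (mu b lam c w : ℝ) :
    HasDerivAt (borrowingLine mu b lam c) ((mu + b) / (2 * lam)) w :=
  (((hasDerivAt_id' w).const_mul _).sub_const _).congr_deriv (mul_one _)

theorem continuous_borrowingLine (mu b lam c : ℝ) : Continuous (borrowingLine mu b lam c) := by
  unfold borrowingLine
  fun_prop

theorem neg_inv_mul_lt_borrowingLine {r mu sigma lam c b m d x wl : ℝ} (hr : 0 < r) (hlam : 0 < lam)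
    (hc : 0 < c) (hs : sigma ≠ 0) (hb : r < b) (hquad : r * d^2 - (r + lam + m) * d + lam = 0)
    (hd1 : 1 < d) (hm : m = (mu - r)^2 / (2 * sigma^2)) (hx : x = (mu - r) / (sigma^2 * (d - 1)))
    (hx0 : 0 < x) (hwl : wl = (x / (1 + x)) * (c / r)) :
    -(1/d) * (c/r - wl) < borrowingLine mu b lam c wl := by
  have hd0 : d - 1 ≠ 0 := sub_ne_zero.2 hd1.ne'
  -- `x (μ - r) = 2m / (d - 1)` and the quadratic turns `m d / (d - 1)` into `r d - λ`
  have hkey : x * (mu - r) * d = 2 * (r * d - lam) := by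
    have h1 : x * (mu - r) * (d - 1) = 2 * m := by
      rw [hx, hm]
      field_simp
    have h2 : m * d = (r * d - lam) * (d - 1) := by linear_combination (-1) * hquad
    have : x * (mu - r) * d * (d - 1) = 2 * (r * d - lam) * (d - 1) := by
      linear_combination d * h1 + 2 * h2
    exact mul_right_cancel₀ hd0 this
  have hgap : borrowingLine mu b lam c wl - -(1/d) * (c/r - wl)
      = c * x * (b - r) / (2 * lam * r * (1 + x)) := by
    unfold borrowingLine
    rw [hwl]
    field_simp
    linear_combination hkey
  have : 0 < c * x * (b - r) / (2 * lam * r * (1 + x)) := by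
    have := sub_pos.2 hb
    positivity
  linarith

section Riccati

variable {mu sigma lam c b : ℝ} {y : ℝ → ℝ}

theorem hasDerivAt_sub_borrowingLine {w : ℝ} (hs : sigma ≠ 0) (hlam : lam ≠ 0) (hw : w ≠ 0)
    (hy : HasDerivAt y (deriv y w) w)
    (hode : sigma^2 * w^2 * (deriv y w - 1) = -2 * lam * (y w)^2 + 2 * (mu * w - c) * y w) :
    HasDerivAt (fun w => y w - borrowingLine mu b lam c w)
      (1 - (mu + b) / (2 * lam) + (mu - b) / sigma^2 * ((mu + b) / (2 * lam) - c / (lam * w))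
        + (2 * (mu * w - c) - 2 * lam * (y w + borrowingLine mu b lam c w)) / (sigma^2 * w^2)
          * (y w - borrowingLine mu b lam c w)) w := by
  refine (hy.sub (hasDerivAt_borrowingLine mu b lam c w)).congr_deriv ?_
  unfold borrowingLine
  field_simp
  linear_combination (2 * lam) * hode

theorem riccati_rightDeriv_zero_eq {L L' : ℝ} (hlam : lam ≠ 0) (hc : c ≠ 0)
    (hy0 : y 0 = -c / lam) (hL : HasDerivWithinAt y L (Ioi 0) 0)
    (hL' : Tendsto (deriv y) (𝓝[>] 0) (𝓝 L'))
    (hode : ∀ᶠ w in 𝓝[>] 0,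
      sigma^2 * w^2 * (deriv y w - 1) = -2 * lam * (y w)^2 + 2 * (mu * w - c) * y w) :
    L = mu / lam := by
  have hid : Tendsto (fun w : ℝ => w) (𝓝[>] 0) (𝓝 0) :=
    tendsto_nhdsWithin_of_tendsto_nhds tendsto_id
  have hlhs : Tendsto (fun w => sigma^2 * w * (deriv y w - 1)) (𝓝[>] 0) (𝓝 0) := by
    simpa using ((hid.const_mul (sigma^2)).mul (hL'.sub_const 1))
  have hrhs : Tendsto (fun w => y w * (2 * mu - 2 * lam * slope y 0 w)) (𝓝[>] 0)
      (𝓝 (-c / lam * (2 * mu - 2 * lam * L))) := by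
    rw [← hy0]
    exact hL.continuousWithinAt.tendsto.mul
      ((((hasDerivWithinAt_iff_tendsto_slope' (lt_irrefl 0)).1 hL).const_mul (2 * lam)).const_sub
        (2 * mu))
  -- dividing the equation by `w` exhibits `y'(0)` through the difference quotient of `y` at `0`
  have heq : (fun w => sigma^2 * w * (deriv y w - 1)) =ᶠ[𝓝[>] 0]
      fun w => y w * (2 * mu - 2 * lam * slope y 0 w) := by
    filter_upwards [hode, self_mem_nhdsWithin] with w hw hw0
    have hw0 : w ≠ 0 := hw0.ne'
    rw [slope_def_field, hy0]
    field_simp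
    linear_combination hw
  have h0 := tendsto_nhds_unique (hlhs.congr' heq) hrhs
  rw [eq_comm, mul_eq_zero, div_eq_zero_iff, neg_eq_zero] at h0
  have := h0.resolve_left (by simp [hc, hlam])
  field_simp
  linarith

theorem exists_riccati_eq_borrowingLine {q : ℝ} (hq : 0 < q) (hlam : 0 < lam) (hc : c ≠ 0)
    (hb : b < mu) (hy : ContDiffOn ℝ 1 y (Icc 0 q))
    (hode : ∀ w ∈ Ioo 0 q,
      sigma^2 * w^2 * (deriv y w - 1) = -2 * lam * (y w)^2 + 2 * (mu * w - c) * y w)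
    (hy0 : y 0 = -c / lam) (hyq : y q < borrowingLine mu b lam c q) :
    ∃ w ∈ Ioo 0 q, y w = borrowingLine mu b lam c w := by
  have hL := hy.hasDerivWithinAt_Ioi_left hq
  have hL0 : derivWithin y (Icc 0 q) 0 = mu / lam :=
    riccati_rightDeriv_zero_eq hlam.ne' hc hy0 hL
      (hy.tendsto_deriv_nhdsGT hq) (eventually_of_mem (Ioo_mem_nhdsGT hq) hode)
  have hslope : 0 < mu / lam - (mu + b) / (2 * lam) := by
    rw [div_sub_div _ _ hlam.ne' (by positivity)]
    exact div_pos (by nlinarith) (by positivity)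
  obtain ⟨w, hw, hgw⟩ := exists_mem_Ioo_eq_zero_of_hasDerivWithinAt_pos hq
    (hy.continuousOn.sub (continuous_borrowingLine mu b lam c).continuousOn)
    (hL.sub (hasDerivAt_borrowingLine mu b lam c 0).hasDerivWithinAt) (hL0 ▸ hslope)
    (by simp [borrowingLine, hy0, neg_div]) (sub_neg.2 hyq)
  exact ⟨w, hw, sub_eq_zero.1 hgw⟩

theorem subsingleton_riccati_eq_borrowingLine {q : ℝ} (hs : sigma ≠ 0) (hlam : 0 < lam)
    (hc : 0 < c) (hb : b < mu) (hyc : ContinuousOn y (Ioc 0 q))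
    (hyd : DifferentiableOn ℝ y (Ioo 0 q))
    (hode : ∀ w ∈ Ioo 0 q,
      sigma^2 * w^2 * (deriv y w - 1) = -2 * lam * (y w)^2 + 2 * (mu * w - c) * y w)
    (hyq : y q < borrowingLine mu b lam c q) :
    {w ∈ Ioo 0 q | y w = borrowingLine mu b lam c w}.Subsingleton := by
  have hz := (continuous_borrowingLine mu b lam c).continuousOn (s := Ioc 0 q)
  have hcoeff : ContinuousOn
      (fun w => (2 * (mu * w - c) - 2 * lam * (y w + borrowingLine mu b lam c w)) / (sigma^2 * w^2))
      (Ioc 0 q) :=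
    ((continuousOn_const.mul ((continuousOn_const.mul continuousOn_id).sub continuousOn_const)).sub
      (continuousOn_const.mul (hyc.add hz))).div (by fun_prop)
      fun w hw => mul_ne_zero (pow_ne_zero 2 hs) (pow_ne_zero 2 hw.1.ne')
  have hsource : StrictMonoOn
      (fun w => 1 - (mu + b) / (2 * lam)
        + (mu - b) / sigma^2 * ((mu + b) / (2 * lam) - c / (lam * w))) (Ioo 0 q) := by
    intro u hu v _ huv
    have : 0 < (mu - b) / sigma^2 := div_pos (sub_pos.2 hb) (by positivity)
    have hu0 := hu.1
    dsimp only
    gcongr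
  simpa only [sub_eq_zero] using subsingleton_zeros_of_hasDerivAt_linear
    (g := fun w => y w - borrowingLine mu b lam c w) (hyc.sub hz) hcoeff
    (fun w hw => hasDerivAt_sub_borrowingLine hs hlam.ne' hw.1.ne'
      ((hyd w hw).differentiableAt (Ioo_mem_nhds hw.1 hw.2)).hasDerivAt (hode w hw))
    hsource (sub_neg.2 hyq)

end Riccati

theorem stmt_14 (r mu sigma lam c b m d x wl : ℝ)
    (hr : 0 < r) (hmu : r < mu) (hs : 0 < sigma) (hlam : 0 < lam) (hc : 0 < c)
    (hb1 : r < b) (hb2 : b < mu)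
    (hm : m = (mu - r)^2 / (2 * sigma^2))
    (hd : d = ((r + lam + m) + Real.sqrt ((r + lam + m)^2 - 4*r*lam)) / (2*r))
    (hx : x = (mu - r) / (sigma^2 * (d - 1)))
    (hwl : wl = (x / (1 + x)) * (c / r))
    (y : ℝ → ℝ)
    (hC1 : ContDiffOn ℝ 1 y (Set.Icc 0 wl))
    (hode : ∀ w ∈ Set.Icc 0 wl,
      sigma^2 * w^2 * (deriv y w - 1) = -2 * lam * (y w)^2 + 2 * (mu * w - c) * y w)
    (hy0 : y 0 = -c / lam)
    (hyl : y wl = -(1/d) * (c/r - wl)) :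
    ∃! wb : ℝ, wb ∈ Set.Ioo 0 wl ∧ y wb = ((mu + b) / (2 * lam)) * wb - c / lam := by
  have hm0 : 0 < m := hm ▸ div_pos (pow_pos (sub_pos.2 hmu) 2) (by positivity)
  obtain ⟨hquad, hd1⟩ := quadratic_and_one_lt_of_eq_root hr hlam hm0 hd
  have hx0 : 0 < x := hx ▸ div_pos (sub_pos.2 hmu) (mul_pos (by positivity) (sub_pos.2 hd1))
  have hwl0 : 0 < wl := hwl ▸ by positivity
  have hyl_lt : y wl < borrowingLine mu b lam c wl :=
    hyl ▸ neg_inv_mul_lt_borrowingLine hr hlam hc hs.ne' hb1 hquad hd1 hm hx hx0 hwl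
  have hode' := fun w (hw : w ∈ Ioo 0 wl) => hode w (Ioo_subset_Icc_self hw)
  obtain ⟨wb, hwb, hywb⟩ :=
    exists_riccati_eq_borrowingLine hwl0 hlam hc.ne' hb2 hC1 hode' hy0 hyl_lt
  exact ⟨wb, ⟨hwb, hywb⟩, fun w hw => subsingleton_riccati_eq_borrowingLine hs.ne' hlam hc hb2
    (hC1.continuousOn.mono Ioc_subset_Icc_self)
    ((hC1.differentiableOn one_ne_zero).mono Ioo_subset_Icc_self) hode' hyl_lt hw ⟨hwb, hywb⟩⟩
end

section
/- Let B₁ > 1, B₂ < 0, S > 0, Q > 0, and define A := S + Q(1−B₂), C := −S + Q(B₁−1), and F(t) := (A·t^{B₁−1} + C·t^{B₂−1})/(B₁ − B₂) for t ≥ 1. Then F(1) = Q, F is strictly increasing on [1, ∞), F(t) → ∞ as t → ∞, and for every L > Q the equation F(t) = L has a unique solution t ∈ (1, ∞). -/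
/-!
The numerator `A t^{B₁-1} + C t^{B₂-1}` has derivative
`t^{B₂-2} ((B₁-1) A t^{B₁-B₂} + (B₂-1) C) ≥ t^{B₂-2} ((B₁-1) A + (B₂-1) C) = t^{B₂-2} S (B₁-B₂)`
on `t ≥ 1`, so `F` is strictly increasing there; its first term dominates at infinity while the
second tends to `0`. Existence and uniqueness of the root of `F t = L` then follow from the
intermediate value theorem and strict monotonicity.
-/

open Filter Topology Set

theorem StrictMonoOn.existsUnique_eq_of_tendsto_atTop
    {α δ : Type*} [ConditionallyCompleteLinearOrder α] [TopologicalSpace α] [OrderTopology α]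
    [DenselyOrdered α] [LinearOrder δ] [TopologicalSpace δ] [OrderClosedTopology δ]
    {f : α → δ} {a : α} (hmono : StrictMonoOn f (Ici a)) (hcont : ContinuousOn f (Ici a))
    (htop : Tendsto f atTop atTop) {L : δ} (hL : f a < L) :
    ∃! t, t ∈ Ioi a ∧ f t = L := by
  obtain ⟨b, hLb, hab⟩ : ∃ b, L ≤ f b ∧ a ≤ b :=
    ((htop.eventually_ge_atTop L).and (eventually_ge_atTop a)).exists
  obtain ⟨t, ht, rfl⟩ :=
    intermediate_value_Ioc hab (hcont.mono Icc_subset_Ici_self) ⟨hL, hLb⟩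
  exact ⟨t, ⟨ht.1, rfl⟩, fun s ⟨hs, hst⟩ =>
    hmono.injOn (mem_Ici_of_Ioi hs) (mem_Ici_of_Ioi ht.1) hst⟩

section RpowCombination

variable {a b A C : ℝ}

theorem continuousOn_rpow_combination :
    ContinuousOn (fun t : ℝ => A * t ^ a + C * t ^ b) (Ioi 0) := fun _ ht =>
  ((Real.continuousAt_rpow_const _ a (Or.inl (ne_of_gt ht))).const_mul A |>.add
    ((Real.continuousAt_rpow_const _ b (Or.inl (ne_of_gt ht))).const_mul C)).continuousWithinAt

theorem strictMonoOn_rpow_combination (hba : b ≤ a) (haA : 0 ≤ a * A)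
    (hpos : 0 < a * A + b * C) :
    StrictMonoOn (fun t : ℝ => A * t ^ a + C * t ^ b) (Ici 1) := by
  refine strictMonoOn_of_deriv_pos (convex_Ici 1)
    (continuousOn_rpow_combination.mono (Ici_subset_Ioi.mpr zero_lt_one)) fun t ht => ?_
  rw [interior_Ici, mem_Ioi] at ht
  have ht0 : t ≠ 0 := (zero_lt_one.trans ht).ne'
  have hderiv : HasDerivAt (fun t : ℝ => A * t ^ a + C * t ^ b)
      (A * (a * t ^ (a - 1)) + C * (b * t ^ (b - 1))) t :=
    ((Real.hasDerivAt_rpow_const (Or.inl ht0)).const_mul A).add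
      ((Real.hasDerivAt_rpow_const (Or.inl ht0)).const_mul C)
  have hpow : t ^ (b - 1) ≤ t ^ (a - 1) :=
    Real.rpow_le_rpow_of_exponent_le ht.le (by linarith)
  have hpow_pos : 0 < t ^ (b - 1) := Real.rpow_pos_of_pos (zero_lt_one.trans ht) _
  rw [hderiv.deriv]
  calc 0 < (a * A + b * C) * t ^ (b - 1) := mul_pos hpos hpow_pos
    _ ≤ A * (a * t ^ (a - 1)) + C * (b * t ^ (b - 1)) := by
      nlinarith [mul_le_mul_of_nonneg_left hpow haA]

theorem tendsto_rpow_combination_atTop (ha : 0 < a) (hb : b < 0) (hA : 0 < A) :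
    Tendsto (fun t : ℝ => A * t ^ a + C * t ^ b) atTop atTop := by
  have hdecay : Tendsto (fun t : ℝ => C * t ^ b) atTop (𝓝 0) := by
    simpa using (tendsto_rpow_neg_atTop (neg_pos.mpr hb)).const_mul C
  exact ((tendsto_rpow_atTop ha).const_mul_atTop hA).atTop_add hdecay

end RpowCombination

theorem stmt_16 (B1 B2 S Q : ℝ) (hB1 : 1 < B1) (hB2 : B2 < 0) (hS : 0 < S) (hQ : 0 < Q)
    (A C : ℝ) (hA : A = S + Q * (1 - B2)) (hC : C = -S + Q * (B1 - 1))
    (F : ℝ → ℝ)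
    (hF : ∀ t : ℝ, 1 ≤ t → F t = (A * t ^ (B1 - 1) + C * t ^ (B2 - 1)) / (B1 - B2)) :
    F 1 = Q ∧
    StrictMonoOn F (Set.Ici 1) ∧
    Tendsto F atTop atTop ∧
    ∀ L : ℝ, Q < L → ∃! t : ℝ, t ∈ Set.Ioi 1 ∧ F t = L := by
  have hden : 0 < B1 - B2 := by linarith
  have hA_pos : 0 < A := by rw [hA]; nlinarith
  have hslope : (B1 - 1) * A + (B2 - 1) * C = S * (B1 - B2) := by rw [hA, hC]; ring
  have hF1 : F 1 = Q := by
    rw [hF 1 le_rfl, Real.one_rpow, Real.one_rpow, hA, hC]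
    field_simp
    ring
  have hmono : StrictMonoOn F (Ici 1) := by
    have hnum := strictMonoOn_rpow_combination (A := A) (C := C) (by linarith : B2 - 1 ≤ B1 - 1)
      (mul_nonneg (by linarith) hA_pos.le) (by rw [hslope]; positivity)
    refine StrictMonoOn.congr (fun x hx y hy hxy => ?_) fun t ht => (hF t ht).symm
    exact div_lt_div_of_pos_right (hnum hx hy hxy) hden
  have htop : Tendsto F atTop atTop :=
    ((tendsto_rpow_combination_atTop (by linarith) (by linarith) hA_pos).atTop_div_const
      hden).congr' <| (eventually_ge_atTop 1).mono fun t ht => (hF t ht).symm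
  have hcont : ContinuousOn F (Ici 1) :=
    ((continuousOn_rpow_combination.mono (Ici_subset_Ioi.mpr zero_lt_one)).div_const
      (B1 - B2)).congr fun t ht => hF t ht
  exact ⟨hF1, hmono, htop, fun L hL =>
    hmono.existsUnique_eq_of_tendsto_atTop hcont htop (hF1.symm ▸ hL)⟩
end

section
/- Let μ > b > 0, σ > 0, λ > 0, c > 0, and let w_b > 0. Assume either (i) μ + b ≥ 2λ and w_b < 2c/(μ+b), or (ii) μ + b < 2λ and w_b < 2c(μ−b)/(σ²(2λ−μ−b) + (μ²−b²)). Then w_b·(σ²(μ+b−2λ) − (μ−b)²) + 2b(μ−b)·(c/b − w_b) > 0. -/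
theorem stmt_17 (mu b sigma lam c wb : ℝ)
    (hmu : b < mu) (hb : 0 < b) (hs : 0 < sigma) (hlam : 0 < lam) (hc : 0 < c)
    (hwb : 0 < wb)
    (hcase : (2*lam ≤ mu + b ∧ wb < 2*c/(mu + b)) ∨
             (mu + b < 2*lam ∧ wb < 2*c*(mu - b) / (sigma^2*(2*lam - mu - b) + (mu^2 - b^2)))) :
    0 < wb * (sigma^2 * (mu + b - 2*lam) - (mu - b)^2) + 2*b*(mu - b)*(c/b - wb) := by
  have hb' : b ≠ 0 := ne_of_gt hb
  have hmb : 0 < mu - b := by linarith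
  have hpb : 0 < mu + b := by linarith
  have key : wb * (sigma^2 * (mu + b - 2*lam) - (mu - b)^2) + 2*b*(mu - b)*(c/b - wb)
      = wb*(sigma^2*(mu+b-2*lam) - (mu^2 - b^2)) + 2*c*(mu-b) := by
    field_simp
    ring
  rw [key]
  rcases hcase with ⟨h1, h2⟩ | ⟨h1, h2⟩
  · have h3 : wb * (mu + b) < 2*c := by
      rw [div_eq_mul_inv] at h2
      calc wb * (mu + b) < 2*c/(mu+b) * (mu+b) := by
            exact mul_lt_mul_of_pos_right h2 hpb
        _ = 2*c := by field_simp
    nlinarith [sq_nonneg sigma, mul_nonneg (le_of_lt hwb) (mul_nonneg (sq_nonneg sigma) (by linarith : (0:ℝ) ≤ mu + b - 2*lam))]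
  · have hD : 0 < sigma^2*(2*lam - mu - b) + (mu^2 - b^2) := by
      have := sq_nonneg sigma
      nlinarith [sq_nonneg sigma, mul_pos (pow_pos hs 2) (by linarith : (0:ℝ) < 2*lam - mu - b), mul_pos hmb hpb]
    have h3 : wb * (sigma^2*(2*lam - mu - b) + (mu^2 - b^2)) < 2*c*(mu-b) := by
      calc wb * (sigma^2*(2*lam - mu - b) + (mu^2 - b^2))
          < 2*c*(mu - b) / (sigma^2*(2*lam - mu - b) + (mu^2 - b^2)) * (sigma^2*(2*lam - mu - b) + (mu^2 - b^2)) :=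
            mul_lt_mul_of_pos_right h2 hD
        _ = 2*c*(mu-b) := by field_simp
    nlinarith
end

section
/- Let μ > λ > 0 and σ > 0. For b ∈ (λ, μ) define m_b := (μ−b)²/(2σ²), B₁(b) := ((b−λ+m_b) + √((b−λ+m_b)² + 4λm_b))/(2m_b), and B₂(b) := ((b−λ+m_b) − √((b−λ+m_b)² + 4λm_b))/(2m_b). Then, as b → μ⁻, B₁(b) → +∞ and B₂(b) → −λ/(μ−λ); consequently ((μ−b)/σ²)·B₂(b) → 0 as b → μ⁻. -/
open Filter Topology

/-!
`B₁(b)` and `B₂(b)` are the two roots of `m_b x² - A_b x - λ = 0` with `A_b = b - λ + m_b`.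
As `b → μ⁻` the leading coefficient `m_b` tends to `0⁺` while `A_b → μ - λ > 0`, so the larger
root behaves like `A_b / m_b → +∞`. Rationalising, the smaller root equals
`-2λ / (A_b + √(A_b² + 4λ m_b))`, which tends to `-λ / (μ - λ)`, the root of the limiting
linear equation; it stays bounded, so multiplying by `(μ - b)/σ² → 0` gives `0`.
-/

section QuadraticRoots

variable {α : Type*} {l : Filter α} {m A : α → ℝ} {a c : ℝ}

lemma tendsto_discrim (hm : Tendsto m l (𝓝 0)) (hA : Tendsto A l (𝓝 a)) :
    Tendsto (fun x => A x ^ 2 + 4 * c * m x) l (𝓝 (a ^ 2)) := by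
  simpa using (hA.pow 2).add (hm.const_mul (4 * c))

lemma tendsto_add_sqrt_discrim (ha : 0 < a) (hm : Tendsto m l (𝓝 0)) (hA : Tendsto A l (𝓝 a)) :
    Tendsto (fun x => A x + √(A x ^ 2 + 4 * c * m x)) l (𝓝 (2 * a)) := by
  have hsqrt := (tendsto_discrim (c := c) hm hA).sqrt
  rw [Real.sqrt_sq ha.le] at hsqrt
  simpa [two_mul] using hA.add hsqrt

theorem tendsto_quadratic_root_add_atTop (ha : 0 < a) (hm : Tendsto m l (𝓝[>] 0))
    (hA : Tendsto A l (𝓝 a)) :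
    Tendsto (fun x => (A x + √(A x ^ 2 + 4 * c * m x)) / (2 * m x)) l atTop := by
  have hinv : Tendsto (fun x => (2 * m x)⁻¹) l atTop := by
    refine Tendsto.inv_tendsto_nhdsGT_zero (tendsto_nhdsWithin_iff.mpr ⟨?_, ?_⟩)
    · simpa using (tendsto_nhds_of_tendsto_nhdsWithin hm).const_mul 2
    · filter_upwards [tendsto_nhdsWithin_iff.mp hm |>.2] with x (hx : 0 < m x)
      exact mul_pos two_pos hx
  simpa only [div_eq_mul_inv] using
    (tendsto_add_sqrt_discrim ha (tendsto_nhds_of_tendsto_nhdsWithin hm) hA).pos_mul_atTop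
      (by positivity) hinv

lemma quadratic_root_sub_eq {m A c : ℝ} (hm : m ≠ 0) (hD : 0 ≤ A ^ 2 + 4 * c * m)
    (hS : A + √(A ^ 2 + 4 * c * m) ≠ 0) :
    (A - √(A ^ 2 + 4 * c * m)) / (2 * m) = -(2 * c) / (A + √(A ^ 2 + 4 * c * m)) := by
  rw [div_eq_div_iff (mul_ne_zero two_ne_zero hm) hS]
  linear_combination (-(1 : ℝ)) * Real.sq_sqrt hD

theorem tendsto_quadratic_root_sub (ha : 0 < a) (hm : Tendsto m l (𝓝[≠] 0))
    (hA : Tendsto A l (𝓝 a)) :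
    Tendsto (fun x => (A x - √(A x ^ 2 + 4 * c * m x)) / (2 * m x)) l (𝓝 (-c / a)) := by
  have hm0 := tendsto_nhds_of_tendsto_nhdsWithin hm
  have hdiscr := tendsto_discrim (c := c) hm0 hA
  have hsum := tendsto_add_sqrt_discrim (c := c) ha hm0 hA
  have hlim : Tendsto (fun x => -(2 * c) / (A x + √(A x ^ 2 + 4 * c * m x))) l
      (𝓝 (-c / a)) := by
    rw [neg_div, ← mul_div_mul_left c a two_ne_zero, ← neg_div]
    exact tendsto_const_nhds.div hsum (by positivity)
  refine hlim.congr' ?_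
  filter_upwards [tendsto_nhdsWithin_iff.mp hm |>.2, hdiscr.eventually_const_lt (by positivity),
    hsum.eventually_const_lt (by positivity)] with x hmx hDx hSx
  exact (quadratic_root_sub_eq hmx hDx.le hSx.ne').symm

end QuadraticRoots

theorem stmt_19_general (mu lam sigma : ℝ) (hmu : lam < mu) (hs : 0 < sigma)
    (mb B1 B2 : ℝ → ℝ)
    (hmb : ∀ b, mb b = (mu - b)^2 / (2 * sigma^2))
    (hB1 : ∀ b, B1 b = ((b - lam + mb b) + Real.sqrt ((b - lam + mb b)^2 + 4*lam*(mb b)))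
            / (2 * mb b))
    (hB2 : ∀ b, B2 b = ((b - lam + mb b) - Real.sqrt ((b - lam + mb b)^2 + 4*lam*(mb b)))
            / (2 * mb b)) :
    Tendsto B1 (𝓝[<] mu) atTop ∧
    Tendsto B2 (𝓝[<] mu) (𝓝 (-lam / (mu - lam))) ∧
    Tendsto (fun b => ((mu - b) / sigma^2) * B2 b) (𝓝[<] mu) (𝓝 0) := by
  have hgap : Tendsto (fun b => mu - b) (𝓝[<] mu) (𝓝 0) := by
    have : Tendsto (fun b => mu - b) (𝓝 mu) (𝓝 (mu - mu)) := tendsto_const_nhds.sub tendsto_id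
    simpa using this.mono_left nhdsWithin_le_nhds
  have hmb0 : Tendsto mb (𝓝[<] mu) (𝓝[>] 0) := by
    refine tendsto_nhdsWithin_iff.mpr ⟨?_, ?_⟩
    · simpa [funext hmb] using (hgap.pow 2).div_const (2 * sigma ^ 2)
    · filter_upwards [self_mem_nhdsWithin] with b (hb : b < mu)
      rw [hmb, Set.mem_Ioi]
      have : 0 < mu - b := sub_pos.mpr hb
      positivity
  have hA : Tendsto (fun b => b - lam + mb b) (𝓝[<] mu) (𝓝 (mu - lam)) := by
    simpa using ((tendsto_nhdsWithin_of_tendsto_nhds tendsto_id).sub_const lam).add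
      (tendsto_nhds_of_tendsto_nhdsWithin hmb0)
  have hB2lim : Tendsto B2 (𝓝[<] mu) (𝓝 (-lam / (mu - lam))) := by
    simpa [funext hB2] using tendsto_quadratic_root_sub (sub_pos.mpr hmu)
      (tendsto_nhdsWithin_mono_right (fun _ h => ne_of_gt h) hmb0) hA
  refine ⟨?_, hB2lim, ?_⟩
  · simpa [funext hB1] using tendsto_quadratic_root_add_atTop (sub_pos.mpr hmu) hmb0 hA
  · simpa using (hgap.div_const (sigma ^ 2)).mul hB2lim

theorem stmt_19 (mu lam sigma : ℝ) (hmu : lam < mu) (hlam : 0 < lam) (hs : 0 < sigma)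
    (mb B1 B2 : ℝ → ℝ)
    (hmb : ∀ b, mb b = (mu - b)^2 / (2 * sigma^2))
    (hB1 : ∀ b, B1 b = ((b - lam + mb b) + Real.sqrt ((b - lam + mb b)^2 + 4*lam*(mb b)))
            / (2 * mb b))
    (hB2 : ∀ b, B2 b = ((b - lam + mb b) - Real.sqrt ((b - lam + mb b)^2 + 4*lam*(mb b)))
            / (2 * mb b)) :
    Tendsto B1 (𝓝[<] mu) atTop ∧
    Tendsto B2 (𝓝[<] mu) (𝓝 (-lam / (mu - lam))) ∧
    Tendsto (fun b => ((mu - b) / sigma^2) * B2 b) (𝓝[<] mu) (𝓝 0) :=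
  stmt_19_general mu lam sigma hmu hs mb B1 B2 hmb hB1 hB2
end
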